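/- E_φ is an ideal of E: for every d ∈ E and every x ∈ E_φ, the product d·x in ℤ[E×] lies in E_φ ∪ {0}. -/

import Mathlib

set_option linter.unusedSectionVars false

/-- A *semilattice with zero*: a commutative idempotent semigroup with an
absorbing element `0`. -/
class SemilatticeWithZero (E : Type) extends CommSemigroup E, Zero E where
  mul_idem : ∀ e : E, e * e = e
  zero_mul : ∀ e : E, 0 * e = 0

namespace IndRes

variable {E : Type} [SemilatticeWithZero E]

/-- `single e c`, viewed in the semigroup algebra `ℤ[E]`. -/
noncomputable def sgl (e : E) (c : ℤ) : MonoidAlgebra ℤ E := MonoidAlgebra.single e c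

/-- Truncation map deleting the coefficient at `0`. -/
noncomputable def T (x : MonoidAlgebra ℤ E) : MonoidAlgebra ℤ E := x - sgl 0 (x.coeff 0)

lemma sgl_apply_self (e : E) (c : ℤ) : (sgl e c).coeff e = c := Finsupp.single_eq_same

lemma sgl_apply_ne (e d : E) (c : ℤ) (h : e ≠ d) : (sgl e c).coeff d = 0 := Finsupp.single_eq_of_ne (Ne.symm h)

lemma sgl_add (e : E) (c d : ℤ) : sgl e (c + d) = sgl e c + sgl e d := MonoidAlgebra.ext (Finsupp.single_add e c d)

lemma sgl_sub (e : E) (c d : ℤ) : sgl e (c - d) = sgl e c - sgl e d := MonoidAlgebra.ext (Finsupp.single_sub e c d)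

lemma T_apply_zero (x : MonoidAlgebra ℤ E) : (T x).coeff 0 = 0 := by
  show ((x - sgl 0 (x.coeff 0) : MonoidAlgebra ℤ E)).coeff 0 = 0
  rw [MonoidAlgebra.coeff_sub, Finsupp.sub_apply, sgl_apply_self, sub_self]

/-- `ℤ[E^×]`, realized as the additive subgroup of the semigroup algebra
`ℤ[E]` consisting of the elements whose coefficient at `0` vanishes; it is the free
`ℤ`-module with basis `E^× = E \ {0}`. -/
noncomputable def ZS (E : Type) [SemilatticeWithZero E] : AddSubgroup (MonoidAlgebra ℤ E) where
  carrier := {x | x.coeff 0 = 0}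
  zero_mem' := rfl
  add_mem' := by
    intro a b ha hb
    simp only [Set.mem_setOf_eq] at *
    rw [MonoidAlgebra.coeff_add, Finsupp.add_apply, ha, hb, add_zero]
  neg_mem' := by
    intro a ha
    simp only [Set.mem_setOf_eq] at *
    rw [MonoidAlgebra.coeff_neg, Finsupp.neg_apply, ha, neg_zero]

/-- The integral semigroup ring `ℤ[E^×]`. -/
abbrev ZE (E : Type) [SemilatticeWithZero E] : Type := ↥(ZS E)

lemma mem_ZS {x : MonoidAlgebra ℤ E} : x ∈ ZS E ↔ x.coeff 0 = 0 := Iff.rfl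

lemma T_eq_self {x : MonoidAlgebra ℤ E} (h : x.coeff 0 = 0) : T x = x := by
  simp [T, h, sgl]

lemma T_add (a b : MonoidAlgebra ℤ E) : T (a + b) = T a + T b := by
  unfold T
  rw [show ((a + b).coeff 0) = a.coeff 0 + b.coeff 0 from Finsupp.add_apply a.coeff b.coeff 0, sgl_add]
  abel

lemma T_sub_sgl (x : MonoidAlgebra ℤ E) (m : ℤ) : T (x - sgl 0 m) = T x := by
  unfold T
  have h : ((x - sgl 0 m : MonoidAlgebra ℤ E)).coeff 0 = x.coeff 0 - m := by
    rw [MonoidAlgebra.coeff_sub, Finsupp.sub_apply, sgl_apply_self]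
  rw [h, sgl_sub]
  abel

lemma single_zero_mul (c : ℤ) (b : MonoidAlgebra ℤ E) :
    (sgl 0 c) * b = sgl 0 (((sgl 0 c * b : MonoidAlgebra ℤ E)).coeff 0) := by
  classical
  ext d
  by_cases hd : d = 0
  · subst hd; rw [sgl_apply_self]
  · rw [sgl_apply_ne 0 d _ (Ne.symm hd)]
    by_contra h
    have hmem : d ∈ ((sgl (0:E) c) * b).coeff.support := Finsupp.mem_support_iff.mpr h
    have h2 := MonoidAlgebra.support_coeff_mul_subset (sgl (0:E) c) b hmem
    rw [Finset.mem_mul] at h2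
    obtain ⟨a, ha, b', _, hab⟩ := h2
    have ha' : a = 0 := by
      have := Finsupp.support_single_subset (ha : a ∈ (Finsupp.single (0:E) c).support)
      simpa using this
    exact hd (by rw [← hab, ha', SemilatticeWithZero.zero_mul])

lemma T_mul_left (a b : MonoidAlgebra ℤ E) : T (T a * b) = T (a * b) := by
  have h1 : T a * b = a * b - (sgl 0 (a.coeff 0)) * b := by rw [T, sub_mul]
  rw [h1, single_zero_mul, T_sub_sgl]

lemma T_mul_right (a b : MonoidAlgebra ℤ E) : T (a * T b) = T (a * b) := by
  rw [mul_comm a (T b), T_mul_left, mul_comm]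

noncomputable instance : Mul (ZE E) :=
  ⟨fun x y => ⟨T (x.1 * y.1), T_apply_zero _⟩⟩

lemma ZE.val_mul (x y : ZE E) : (x * y).1 = T (x.1 * y.1) := rfl

noncomputable instance : NonUnitalCommRing (ZE E) :=
  { (inferInstance : AddCommGroup (ZE E)) with
    mul := (· * ·)
    left_distrib := by
      intro x y z
      apply Subtype.ext
      show T (x.1 * (y.1 + z.1)) = T (x.1 * y.1) + T (x.1 * z.1)
      rw [mul_add, T_add]
    right_distrib := by
      intro x y z
      apply Subtype.ext
      show T ((x.1 + y.1) * z.1) = T (x.1 * z.1) + T (y.1 * z.1)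
      rw [add_mul, T_add]
    zero_mul := by
      intro x
      apply Subtype.ext
      show T ((0 : MonoidAlgebra ℤ E) * x.1) = 0
      rw [zero_mul]
      simp [T, sgl]
    mul_zero := by
      intro x
      apply Subtype.ext
      show T (x.1 * (0 : MonoidAlgebra ℤ E)) = 0
      rw [mul_zero]
      simp [T, sgl]
    mul_assoc := by
      intro x y z
      apply Subtype.ext
      show T (T (x.1 * y.1) * z.1) = T (x.1 * T (y.1 * z.1))
      rw [T_mul_left, T_mul_right, mul_assoc]
    mul_comm := by
      intro x y
      apply Subtype.ext
      show T (x.1 * y.1) = T (y.1 * x.1)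
      rw [mul_comm] }

/-- The canonical image of `e ∈ E` in `ℤ[E^×]`: the basis element `e` if `e ≠ 0`,
and `0` if `e = 0`. -/
noncomputable def elt (e : E) : ZE E := ⟨T (sgl e 1), T_apply_zero _⟩

/-- Product of a (nonempty) finite family in a commutative non-unital ring, computed inside
the unitization.  For a nonempty index set this is the iterated product. -/
noncomputable def nprod {ι A : Type} [NonUnitalCommRing A] (s : Finset ι) (f : ι → A) : A :=
  (∏ j ∈ s, (Unitization.inr (f j) : Unitization ℤ A)).snd

/-- The join `⋁_{j ∈ J} x_j = ∑_{∅ ≠ J' ⊆ J} (-1)^{|J'|+1} ∏_{j ∈ J'} x_j`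
of a finite family of idempotents of a commutative non-unital ring. -/
noncomputable def rjoin {ι A : Type} [NonUnitalCommRing A] (s : Finset ι) (f : ι → A) : A :=
  ∑ t ∈ s.powerset.filter (fun t => t.Nonempty), ((-1 : ℤ) ^ (t.card + 1)) • nprod t f

/-- The join `⋁_{j ∈ J} e_j ∈ ℤ[E^×]` of a finite family of elements of `E`:
`∑_{∅ ≠ J' ⊆ J} (-1)^{|J'|+1} ∏_{j ∈ J'} e_j`, where a product whose value in `E`
is `0` contributes `0`. -/
noncomputable def join {ι : Type} (s : Finset ι) (e : ι → E) : ZE E :=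
  rjoin s (fun j => elt (e j))

/-- Iterated product of a nonempty list in a semigroup with zero (the value on the
empty list is the junk value `0`). -/
def listProd : List E → E
  | [] => 0
  | [a] => a
  | a :: b :: l => a * listProd (b :: l)

/-- The product `∏_{j ∈ s} f j ∈ E` of a (nonempty) finite family. -/
noncomputable def eprod {ι : Type} (s : Finset ι) (f : ι → E) : E :=
  listProd (s.toList.map f)

/-- The support `E(x)` of `x ∈ ℤ[E^×]`: the finite set of elements of `E^×` appearing
with a nonzero coefficient in the reduced form of `x`. -/
noncomputable def supp (x : ZE E) : Finset E := x.1.coeff.support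

section Action

variable {Γ : Type} [Group Γ] [MulAction Γ E]

/-- The induced action of `g ∈ Γ` on `ℤ[E^×]`: the `ℤ`-linear map sending a basis
element `e ∈ E^×` to `g • e`.  (When the action fixes `0` — which is the case for an
action by semigroup automorphisms fixing `0` — the truncation `T` is a no-op, and this
is the automorphism of `ℤ[E^×]` induced by `τ_g`.) -/
noncomputable def act (g : Γ) (x : ZE E) : ZE E :=
  ⟨T (MonoidAlgebra.mapDomain (fun e : E => g • e) x.1), T_apply_zero _⟩

end Action



attribute [local instance] Classical.propDecidable

variable {E : Type} [SemilatticeWithZero E]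

/-- A Γ-semilattice structure: the group acts by semigroup automorphisms fixing `0`. -/
def IsGammaSL (Γ E : Type) [Group Γ] [SemilatticeWithZero E] [MulAction Γ E] : Prop :=
  (∀ (g : Γ) (x y : E), g • (x * y) = (g • x) * (g • y)) ∧ (∀ g : Γ, g • (0 : E) = 0)

/-- The set `E_φ`. -/
def Ephi {D : Type} [NonUnitalCommRing D] (φ : ZE E →ₙ+* D) : Set (ZE E) :=
  { x | ∃ (e : E) (J : Finset E), e ≠ 0 ∧ (∀ f ∈ J, f ≠ 0 ∧ f * e = f ∧ f ≠ e) ∧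
      x = elt e - join J (fun f => f) ∧
      φ (elt e) = rjoin J (fun f => φ (elt f)) }

/-- `R` is a finite cover for `e ∈ E^×`. -/
def IsCover (e : E) (R : Finset E) : Prop :=
  (∀ f ∈ R, f ≠ 0 ∧ f * e = f) ∧
  ∀ f' : E, f' ≠ 0 → f' * e = f' → ∃ f ∈ R, f' * f ≠ 0

/-- `ℛ` is a collection of finite covers for `E`. -/
def CovSystem (ℛ : E → Set (Finset E)) : Prop :=
  ∀ e : E, e ≠ 0 → ∀ R ∈ ℛ e, IsCover e R

/-- Condition (i). -/
def CondI (ℛ : E → Set (Finset E)) : Prop :=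
  ∀ d e : E, d ≠ 0 → e ≠ 0 → d * e ≠ 0 → ∀ R ∈ ℛ e,
    d * e ∈ (R.image (fun f => d * f)).erase 0 ∨ (R.image (fun f => d * f)).erase 0 ∈ ℛ (d * e)

/-- Condition (ii). -/
def CondII (ℛ : E → Set (Finset E)) : Prop :=
  ∀ e : E, e ≠ 0 → ∀ r : ℕ, 0 < r → ∀ Rs : Fin r → Finset E,
    Function.Injective Rs → (∀ i, Rs i ∈ ℛ e) → ∀ ε : Fin r → E,
    (∀ i, ε i ∈ supp (join (Rs i) (fun f => f))) → ∀ j : Fin r,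
      (if r = 1 then e else eprod (Finset.univ.erase j) ε) ≠ 0 →
      eprod Finset.univ ε * (if r = 1 then e else eprod (Finset.univ.erase j) ε)
          = eprod Finset.univ ε ∧
      eprod Finset.univ ε ≠ (if r = 1 then e else eprod (Finset.univ.erase j) ε)

/-- Condition (iii). -/
def CondIII (Γ : Type) [Group Γ] [MulAction Γ E] (ℛ : E → Set (Finset E)) : Prop :=
  ∀ (g : Γ) (e : E), e ≠ 0 →
    (fun R : Finset E => R.image (fun f => g • f)) '' (ℛ e) = ℛ (g • e)

/-- `e(𝒮) = ∏_{R ∈ 𝒮} (e - ⋁R) ∈ ℤ[E^×]`. -/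
noncomputable def eS (e : E) (S : Finset (Finset E)) : ZE E :=
  nprod S (fun R => elt e - join R (fun f => f))

/-- `E(E,ℛ) = {e(𝒮) : e ∈ E^×, 𝒮 ⊆ ℛ(e) nonempty finite} ∪ {0} ⊆ ℤ[E^×]`. -/
def EER (ℛ : E → Set (Finset E)) : Set (ZE E) :=
  {x | ∃ (e : E) (S : Finset (Finset E)), e ≠ 0 ∧ S.Nonempty ∧ ↑S ⊆ ℛ e ∧ x = eS e S} ∪ {0}

/-- `R(𝒮,R̃) = {e(𝒮 ∪ {R̃})} ∪ {f ⬝ e(𝒮) : f ∈ R̃, f ⬝ e(𝒮) ≠ 0}`. -/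
noncomputable def RSR (e : E) (S : Finset (Finset E)) (Rt : Finset E) : Finset (ZE E) :=
  insert (eS e (insert Rt S)) ((Rt.image (fun f => elt f * eS e S)).erase 0)

/-- The collection of finite covers `ℛ(E,ℛ)` on `E(E,ℛ)`, assigning to an element
`x = e(𝒮)` of `E(E,ℛ)^×` the covers `R(𝒮,R̃)`, `R̃ ∈ ℛ(e) ∖ 𝒮` (over all ways of
presenting `x` in the form `e(𝒮)`). -/
def RER (ℛ : E → Set (Finset E)) (x : ZE E) : Set (Finset (ZE E)) :=
  {C | ∃ (e : E) (S : Finset (Finset E)) (Rt : Finset E),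
        e ≠ 0 ∧ S.Nonempty ∧ ↑S ⊆ ℛ e ∧ Rt ∈ ℛ e ∧ Rt ∉ S ∧ x = eS e S ∧ C = RSR e S Rt}

/-- The `ℤ`-linear map `ℤ[E₁^×] → ℤ[E₂^×]` induced by a map `θ` from `E₁` to `ℤ[E₂^×]`,
sending a basis element `e' ∈ E₁^×` to `θ e'`. -/
noncomputable def indMap {E₁ E₂ : Type} [SemilatticeWithZero E₁] [SemilatticeWithZero E₂]
    (θ : E₁ → ZE E₂) : ZE E₁ →ₗ[ℤ] ZE E₂ :=
  (Finsupp.linearCombination ℤ θ).comp ((MonoidAlgebra.coeffLinearEquiv ℤ).toLinearMap.comp (ZS E₁).subtype.toIntLinearMap)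

/-- `(E₁, ℛ₁, θ)` is a realization of the construction `(E(E,ℛ), ℛ(E,ℛ))`:
`θ` identifies the abstract Γ-semilattice `E₁` with `E(E,ℛ) ⊆ ℤ[E^×]` (equivariantly,
multiplicatively and preserving `0`), and `ℛ₁` corresponds to `ℛ(E,ℛ)` under this
identification. -/
def Realizes {Γ E E₁ : Type} [Group Γ] [SemilatticeWithZero E] [MulAction Γ E]
    [SemilatticeWithZero E₁] [MulAction Γ E₁]
    (ℛ : E → Set (Finset E)) (ℛ₁ : E₁ → Set (Finset E₁)) (θ : E₁ → ZE E) : Prop :=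
  Function.Injective θ ∧ Set.range θ = EER ℛ ∧ θ 0 = 0 ∧
  (∀ x y : E₁, θ (x * y) = θ x * θ y) ∧
  (∀ (g : Γ) (x : E₁), θ (g • x) = act g (θ x)) ∧
  (∀ e' : E₁, e' ≠ 0 → ∀ C : Finset E₁, C ∈ ℛ₁ e' ↔ C.image θ ∈ RER ℛ (θ e'))

end IndRes

open IndRes

/-!
In the unitization a join becomes `⋁ x_j = 1 - ∏ (1 - x_j)`. Since an idempotent `p` splits the
ring into the corners `(1 - p)` and `p`, this gives `p · ⋁ x_j = ⋁ p x_j`; for `p = d` and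
`x_j = e_j` idempotents collapse, so `d (e - ⋁ e_j) = de - ⋁_{d e_j ≠ 0} d e_j`. Applying the same
identity in `D` to the `φ (e_j)` transports the defining equation of `E_φ`, so the product lies in
`E_φ`, except when `de = 0` or `de = d e_j` for some `j`, where it vanishes.
-/

section CommRing

variable {ι U : Type} [CommRing U]

lemma mul_prod_eq_self_of_forall {a : U} {s : Finset ι} {u : ι → U}
    (h : ∀ j ∈ s, a * u j = a) : a * ∏ j ∈ s, u j = a :=
  Finset.prod_induction u (fun b => a * b = a) (fun b c hb hc => by rw [← mul_assoc, hb, hc])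
    (mul_one a) h

/-- The corners `(1 - p) U` and `p U` of an idempotent `p` multiply separately. -/
lemma IsIdempotentElem.prod_one_sub_mul {p : U} (hp : IsIdempotentElem p) (s : Finset ι)
    (x : ι → U) : ∏ j ∈ s, (1 - p * x j) = 1 - p + p * ∏ j ∈ s, (1 - x j) := by
  classical
  induction s using Finset.induction_on with
  | empty => simp
  | insert a s ha ih =>
    rw [Finset.prod_insert ha, Finset.prod_insert ha, ih]
    linear_combination x a * (1 - ∏ j ∈ s, (1 - x j)) * hp.eq

end CommRing

section Join

open Unitization

variable {ι A : Type} [NonUnitalCommRing A]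

lemma inr_nprod {s : Finset ι} (hs : s.Nonempty) (f : ι → A) :
    (inr (nprod s f) : Unitization ℤ A) = ∏ j ∈ s, (inr (f j) : Unitization ℤ A) := by
  obtain ⟨j, hj⟩ := hs
  have hfst : (∏ j ∈ s, (inr (f j) : Unitization ℤ A)).fst = 0 := by
    rw [show (∏ j ∈ s, (inr (f j) : Unitization ℤ A)).fst
        = ∏ j ∈ s, (inr (f j) : Unitization ℤ A).fst from map_prod (fstHom ℤ A).toMonoidHom _ _]
    exact Finset.prod_eq_zero hj (fst_inr ℤ (f j))
  rw [nprod, ← inl_fst_add_inr_snd_eq (∏ j ∈ s, (inr (f j) : Unitization ℤ A)), hfst]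
  simp

lemma inr_rjoin (s : Finset ι) (f : ι → A) :
    (inr (rjoin s f) : Unitization ℤ A) = 1 - ∏ j ∈ s, (1 - (inr (f j) : Unitization ℤ A)) := by
  classical
  have hexpand : ∏ j ∈ s, (1 - (inr (f j) : Unitization ℤ A))
      = ∑ t ∈ s.powerset, (-1) ^ t.card * ∏ j ∈ t, (inr (f j) : Unitization ℤ A) := by
    simp_rw [sub_eq_add_neg, Finset.prod_one_add (R := Unitization ℤ A),
      Finset.prod_neg (M := Unitization ℤ A)]
  have hempty : s.powerset.filter (fun t => ¬ t.Nonempty) = {∅} := by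
    ext t
    simp only [Finset.mem_filter, Finset.mem_powerset, Finset.not_nonempty_iff_eq_empty,
      Finset.mem_singleton]
    exact ⟨And.right, fun ht => ⟨ht ▸ Finset.empty_subset s, ht⟩⟩
  have hinr_sum : ∀ (T : Finset (Finset ι)) (g : Finset ι → A),
      (inr (∑ t ∈ T, g t) : Unitization ℤ A) = ∑ t ∈ T, (inr (g t) : Unitization ℤ A) :=
    fun T g => map_sum (inrNonUnitalAlgHom ℤ A) g T
  rw [hexpand, ← Finset.sum_filter_add_sum_filter_not s.powerset (fun t => t.Nonempty), hempty,
    rjoin, hinr_sum]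
  simp only [Finset.sum_singleton, Finset.card_empty, pow_zero, Finset.prod_empty, mul_one]
  rw [sub_add_cancel_right, ← Finset.sum_neg_distrib]
  refine Finset.sum_congr rfl fun t ht => ?_
  rw [inr_smul, inr_nprod (Finset.mem_filter.mp ht).2, zsmul_eq_mul,
    Int.cast_pow (R := Unitization ℤ A), Int.cast_neg (R := Unitization ℤ A),
    Int.cast_one (R := Unitization ℤ A)]
  ring

lemma rjoin_empty (f : ι → A) : rjoin ∅ f = 0 := by
  simp [rjoin, Finset.filter_singleton]

lemma mul_rjoin {p : A} (hp : IsIdempotentElem p) (s : Finset ι) (f : ι → A) :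
    p * rjoin s f = rjoin s (fun j => p * f j) := by
  apply inr_injective (R := ℤ)
  have hp' : IsIdempotentElem (inr p : Unitization ℤ A) := by
    rw [IsIdempotentElem, ← inr_mul, hp.eq]
  simp only [inr_mul, inr_rjoin]
  rw [IsIdempotentElem.prod_one_sub_mul (U := Unitization ℤ A) hp']
  ring

lemma rjoin_comp_eq_rjoin_image {κ : Type} [DecidableEq κ] {x : κ → A}
    (hx : ∀ b, IsIdempotentElem (x b)) (s : Finset ι) (g : ι → κ) :
    rjoin s (fun j => x (g j)) = rjoin (s.image g) x := by
  apply inr_injective (R := ℤ)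
  have hx' : ∀ b, IsIdempotentElem (1 - (inr (x b) : Unitization ℤ A)) := fun b => by
    have h : (inr (x b) : Unitization ℤ A) * inr (x b) = inr (x b) := by rw [← inr_mul, (hx b).eq]
    rw [IsIdempotentElem]
    linear_combination h
  rw [inr_rjoin, inr_rjoin, Finset.prod_comp (fun b => 1 - (inr (x b) : Unitization ℤ A)) g]
  congr 1
  refine Finset.prod_congr rfl fun b hb => ?_
  obtain ⟨n, hn⟩ := Nat.exists_eq_add_one.mpr
    (Finset.card_pos.mpr (Finset.filter_nonempty_iff.mpr (by simpa using hb)))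
  rw [hn, IsIdempotentElem.pow_succ_eq (M := Unitization ℤ A) n (hx' b)]

lemma rjoin_erase_of_eq_zero {κ : Type} [DecidableEq κ] {x : κ → A} {a : κ} (ha : x a = 0)
    (s : Finset κ) : rjoin (s.erase a) x = rjoin s x := by
  apply inr_injective (R := ℤ)
  rw [inr_rjoin, inr_rjoin, Finset.prod_erase _ (by simp [ha])]

lemma rjoin_eq_of_mem {κ : Type} [DecidableEq κ] {x : κ → A} {s : Finset κ} {m : κ}
    (hm : m ∈ s) (h : ∀ j ∈ s, x m * x j = x j) : rjoin s x = x m := by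
  apply inr_injective (R := ℤ)
  have habsorb : (1 - (inr (x m) : Unitization ℤ A)) * ∏ j ∈ s.erase m, (1 - inr (x j))
      = 1 - inr (x m) := mul_prod_eq_self_of_forall (U := Unitization ℤ A) fun j hj => by
    have hmj : (inr (x m) : Unitization ℤ A) * inr (x j) = inr (x j) := by
      rw [← inr_mul, h j (Finset.mem_of_mem_erase hj)]
    linear_combination hmj
  rw [inr_rjoin, ← Finset.mul_prod_erase _ _ hm, habsorb]
  ring

end Join

section Semilattice

variable {E A : Type} [SemilatticeWithZero E] [NonUnitalCommRing A]

noncomputable def eltHom : E →ₙ* ZE E where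
  toFun := elt
  map_mul' d e := by
    apply Subtype.ext
    change T (sgl (d * e) 1) = T (T (sgl d 1) * T (sgl e 1))
    rw [T_mul_left, T_mul_right, sgl, sgl, sgl, MonoidAlgebra.single_mul_single, one_mul]

lemma elt_mul (d e : E) : elt (d * e) = elt d * elt e :=
  map_mul eltHom d e

lemma elt_zero : elt (0 : E) = 0 :=
  Subtype.ext (by simp [elt, T, sgl])

variable [DecidableEq E] (q : E →ₙ* A)

lemma MulHom.isIdempotentElem_apply (e : E) : IsIdempotentElem (q e) := by
  rw [IsIdempotentElem, ← map_mul, SemilatticeWithZero.mul_idem]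

lemma mul_rjoin_eq_rjoin_image_erase (hq : q 0 = 0) (d : E) (J : Finset E) :
    q d * rjoin J q = rjoin ((J.image (d * ·)).erase 0) q := by
  rw [mul_rjoin (q.isIdempotentElem_apply d), rjoin_erase_of_eq_zero hq,
    ← rjoin_comp_eq_rjoin_image q.isIdempotentElem_apply]
  simp only [map_mul]

lemma rjoin_eq_of_mem_of_forall_le {J : Finset E} {e : E} (he : e ∈ J)
    (hJ : ∀ f ∈ J, f * e = f) : rjoin J q = q e :=
  rjoin_eq_of_mem he fun f hf => by rw [← map_mul, mul_comm, hJ f hf]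

end Semilattice

theorem statement_1_general {E D : Type} [SemilatticeWithZero E] [NonUnitalCommRing D]
    (φ : ZE E →ₙ+* D) :
    ∀ d : E, ∀ x ∈ Ephi φ, elt d * x ∈ Ephi φ ∪ {0} := by
  classical
  rintro d x ⟨e, J, -, hJ, rfl, hφ⟩
  set J' := (J.image (d * ·)).erase 0 with hJ'
  have hJ'le : ∀ g ∈ J', g ≠ 0 ∧ g * (d * e) = g := by
    simp only [hJ', Finset.mem_erase, Finset.mem_image]
    rintro _ ⟨hg, f, hf, rfl⟩
    exact ⟨hg, by rw [mul_mul_mul_comm, SemilatticeWithZero.mul_idem, (hJ f hf).2.1]⟩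
  have hprod : elt d * (elt e - join J fun f => f) = elt (d * e) - join J' fun f => f := by
    rw [mul_sub, elt_mul]
    exact congrArg _ (mul_rjoin_eq_rjoin_image_erase eltHom elt_zero d J)
  rw [hprod]
  by_cases hde : d * e = 0 ∨ d * e ∈ J'
  · refine Or.inr (sub_eq_zero.mpr ?_)
    rcases hde with hde | hde
    · have : J' = ∅ := Finset.eq_empty_of_forall_notMem fun g hg =>
        (hJ'le g hg).1 (by rw [← (hJ'le g hg).2, hde, mul_comm, SemilatticeWithZero.zero_mul])
      rw [this, hde, elt_zero, join, rjoin_empty]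
    · exact (rjoin_eq_of_mem_of_forall_le eltHom hde fun g hg => (hJ'le g hg).2).symm
  · push Not at hde
    refine Or.inl ⟨d * e, J', hde.1, fun g hg => ⟨(hJ'le g hg).1, (hJ'le g hg).2,
      fun h => hde.2 (h ▸ hg)⟩, rfl, ?_⟩
    have h := mul_rjoin_eq_rjoin_image_erase ((φ : ZE E →ₙ* D).comp eltHom)
      (by simp [eltHom, elt_zero]) d J
    simp only [MulHom.comp_apply] at h
    rw [elt_mul, map_mul]
    exact (congrArg _ hφ).trans h

theorem statement_1 {E D : Type} [SemilatticeWithZero E] [NonUnitalCommRing D]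
    (hD : NonUnitalAlgebra.adjoin ℤ {d : D | d * d = d} = ⊤)
    (φ : ZE E →ₙ+* D) :
    ∀ d : E, ∀ x ∈ Ephi φ, elt d * x ∈ Ephi φ ∪ {0} :=
  statement_1_general φ
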